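/- arXiv:cs/0505013 — 2 statements merged into one kernel-verified Lean document; each statement's English description precedes it below -/
import Mathlib

section
/- Define the carry predicate carry(i, X, Y) to hold iff there exists j < i such that j ∈ X, j ∈ Y, and for all ℓ with j < ℓ < i, exactly one of ℓ ∈ X, ℓ ∈ Y holds. Define the string sum X + Y as the set of i such that (i ∈ X) XOR (i ∈ Y) XOR carry(i, X, Y). Then for finite X, Y ⊆ ℕ, the number represented by X + Y equals the sum of the numbers represented by X and Y, where a finite set S represents the number ∑_{i ∈ S} 2^i. -/
/-- carry at bit position i when adding X and Y. -/
def carry (i : ℕ) (X Y : Finset ℕ) : Prop :=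
  ∃ j < i, j ∈ X ∧ j ∈ Y ∧ ∀ ℓ, j < ℓ → ℓ < i → Xor' (ℓ ∈ X) (ℓ ∈ Y)

/-- the number represented by a finite set of bit positions. -/
def num (S : Finset ℕ) : ℕ := ∑ i ∈ S, 2 ^ i

/-!
Schoolbook addition: `carry` satisfies the carry recursion of a ripple-carry adder, so by induction
on `i`, the bits of `X + Y` below `i` together with the carry into position `i` add up to the bits of
`X` and `Y` below `i`. Once `i` is past every element of `X` and `Y`, the carry vanishes.
-/

open Finset

theorem full_adder {R : Type*} [Semiring R] {a b c s d : Prop} [Decidable a] [Decidable b]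
    [Decidable c] [Decidable s] [Decidable d] (hs : s ↔ Xor' (Xor' a b) c)
    (hd : d ↔ (a ∧ b) ∨ (Xor' a b ∧ c)) (w : R) :
    (if s then w else 0) + (if d then 2 * w else 0) =
      (if a then w else 0) + (if b then w else 0) + (if c then w else 0) := by
  by_cases a <;> by_cases b <;> by_cases c <;> simp_all [Xor', two_mul, add_assoc]

section carry

variable {X Y : Finset ℕ}

theorem not_carry_zero : ¬ carry 0 X Y := by
  rintro ⟨j, hj, -⟩
  exact Nat.not_lt_zero j hj

theorem carry_succ_iff {i : ℕ} :
    carry (i + 1) X Y ↔ (i ∈ X ∧ i ∈ Y) ∨ (Xor' (i ∈ X) (i ∈ Y) ∧ carry i X Y) := by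
  constructor
  · rintro ⟨j, hj, hjX, hjY, hxor⟩
    rcases (Nat.lt_succ_iff.mp hj).eq_or_lt with rfl | hji
    · exact Or.inl ⟨hjX, hjY⟩
    · exact Or.inr ⟨hxor i hji i.lt_succ_self,
        j, hji, hjX, hjY, fun ℓ hjℓ hℓi => hxor ℓ hjℓ (hℓi.trans i.lt_succ_self)⟩
  · rintro (⟨hiX, hiY⟩ | ⟨hxor_i, j, hji, hjX, hjY, hxor⟩)
    · exact ⟨i, i.lt_succ_self, hiX, hiY, fun ℓ hiℓ hℓi => absurd hℓi (by omega)⟩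
    · refine ⟨j, hji.trans i.lt_succ_self, hjX, hjY, fun ℓ hjℓ hℓi => ?_⟩
      rcases (Nat.lt_succ_iff.mp hℓi).eq_or_lt with rfl | hℓi'
      · exact hxor_i
      · exact hxor ℓ hjℓ hℓi'

theorem not_carry_succ_of_subset_range {n : ℕ} (hX : X ⊆ range n) (hY : Y ⊆ range n) :
    ¬ carry (n + 1) X Y := by
  rintro ⟨j, -, hjX, -, hxor⟩
  rcases hxor n (mem_range.mp (hX hjX)) n.lt_succ_self with ⟨hnX, -⟩ | ⟨hnY, -⟩
  · exact lt_irrefl n (mem_range.mp (hX hnX))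
  · exact lt_irrefl n (mem_range.mp (hY hnY))

end carry

theorem num_inter_range_succ (S : Finset ℕ) (i : ℕ) :
    num (S ∩ range (i + 1)) = num (S ∩ range i) + if i ∈ S then 2 ^ i else 0 := by
  rw [range_add_one]
  split_ifs with hi
  · rw [inter_insert_of_mem hi, num, num,
      sum_insert (fun h => notMem_range_self (mem_inter.mp h).2), add_comm]
  · rw [inter_insert_of_notMem hi, add_zero]

open scoped Classical in
theorem num_inter_range_add_carry {X Y S : Finset ℕ}
    (hS : ∀ i, i ∈ S ↔ Xor' (Xor' (i ∈ X) (i ∈ Y)) (carry i X Y)) (i : ℕ) :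
    num (S ∩ range i) + (if carry i X Y then 2 ^ i else 0) =
      num (X ∩ range i) + num (Y ∩ range i) := by
  induction i with
  | zero => simp [num, not_carry_zero]
  | succ i ih =>
    have step := full_adder (hS i) carry_succ_iff (2 ^ i : ℕ)
    rw [← pow_succ'] at step
    simp only [num_inter_range_succ]
    omega

theorem string_add_correct (X Y S : Finset ℕ)
    (hS : ∀ i, i ∈ S ↔ Xor' (Xor' (i ∈ X) (i ∈ Y)) (carry i X Y)) :
    num S = num X + num Y := by
  obtain ⟨n, hn⟩ := exists_nat_subset_range (X ∪ Y ∪ S)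
  have hX : X ⊆ range n := subset_union_left.trans (subset_union_left.trans hn)
  have hY : Y ⊆ range n := subset_union_right.trans (subset_union_left.trans hn)
  have hS' : S ⊆ range n := subset_union_right.trans hn
  have hsucc : range n ⊆ range (n + 1) := range_subset_range.mpr n.le_succ
  have key := num_inter_range_add_carry hS (n + 1)
  rwa [inter_eq_left.mpr (hX.trans hsucc), inter_eq_left.mpr (hY.trans hsucc),
    inter_eq_left.mpr (hS'.trans hsucc), if_neg (not_carry_succ_of_subset_range hX hY),
    add_zero] at key
end

section
/- Let W : ℕ → ℕ with W(i) ≤ n for all i < m (column counts), let ℓ = 1 + ⌈log₂ n⌉ and k = ⌈m/(2ℓ)⌉, and for i < 2k let b_i = ∑_{j<ℓ} 2^j · W(iℓ + j) (treating W(i) = 0 for i ≥ m). Then each b_i < 2^{2ℓ}, and ∑_{i<m} 2^i W(i) = L + H where L = ∑_{i<k} 2^{2iℓ} b_{2i} and H = ∑_{i<k} 2^{(2i+1)ℓ} b_{2i+1}. -/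
/-!
Since `W` vanishes from `m` on and `m ≤ 2kℓ`, the weighted sum may be taken over `2kℓ` columns;
cutting these into `2k` blocks of `ℓ` consecutive columns, block `i` contributes `2^(iℓ) b_i`,
and splitting the blocks by parity gives `L + H`. Each column count is at most `n < 2^ℓ`, so
`b_i ≤ (2^ℓ - 1)^2 < 2^(2ℓ)`.
-/

open Finset

theorem Finset.sum_range_mul_eq_sum_sum {M : Type*} [AddCommMonoid M] (f : ℕ → M) (N ℓ : ℕ) :
    ∑ i ∈ range (N * ℓ), f i = ∑ i ∈ range N, ∑ j ∈ range ℓ, f (i * ℓ + j) := by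
  induction N with
  | zero => simp
  | succ N ih => rw [Nat.succ_mul, sum_range_add, ih, sum_range_succ]

theorem Finset.sum_range_two_mul {M : Type*} [AddCommMonoid M] (f : ℕ → M) (k : ℕ) :
    ∑ i ∈ range (2 * k), f i = ∑ i ∈ range k, f (2 * i) + ∑ i ∈ range k, f (2 * i + 1) := by
  simp [mul_comm 2, sum_range_mul_eq_sum_sum, sum_range_succ, sum_add_distrib]

theorem sum_range_two_pow_mul_le {d : ℕ → ℕ} {c ℓ : ℕ} (h : ∀ j < ℓ, d j ≤ c) :
    ∑ j ∈ range ℓ, 2 ^ j * d j ≤ (2 ^ ℓ - 1) * c := by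
  calc ∑ j ∈ range ℓ, 2 ^ j * d j ≤ ∑ j ∈ range ℓ, 2 ^ j * c :=
        sum_le_sum fun j hj => Nat.mul_le_mul_left _ (h j (mem_range.1 hj))
    _ = (2 ^ ℓ - 1) * c := by
        rw [← sum_mul, Nat.geomSum_eq le_rfl, Nat.add_one_sub_one, Nat.div_one]

theorem sum_range_two_pow_mul_lt_two_pow_two_mul {d : ℕ → ℕ} {ℓ : ℕ} (h : ∀ j < ℓ, d j < 2 ^ ℓ) :
    ∑ j ∈ range ℓ, 2 ^ j * d j < 2 ^ (2 * ℓ) := by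
  have hpos : 0 < 2 ^ ℓ := Nat.two_pow_pos ℓ
  calc ∑ j ∈ range ℓ, 2 ^ j * d j ≤ (2 ^ ℓ - 1) * (2 ^ ℓ - 1) :=
        sum_range_two_pow_mul_le fun j hj => Nat.le_sub_one_of_lt (h j hj)
    _ < 2 ^ ℓ * 2 ^ ℓ := Nat.mul_self_lt_mul_self (by omega)
    _ = 2 ^ (2 * ℓ) := by rw [two_mul, pow_add]

theorem Finset.sum_range_two_pow_mul_eq_sum_blocks (W : ℕ → ℕ) (N ℓ : ℕ) :
    ∑ i ∈ range (N * ℓ), 2 ^ i * W i =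
      ∑ i ∈ range N, 2 ^ (i * ℓ) * ∑ j ∈ range ℓ, 2 ^ j * W (i * ℓ + j) := by
  simp only [sum_range_mul_eq_sum_sum, mul_sum, pow_add, mul_assoc]

theorem block_decomposition_general (W : ℕ → ℕ) (n m : ℕ)
    (hW : ∀ i < m, W i ≤ n) (hW0 : ∀ i, m ≤ i → W i = 0)
    (ℓ k : ℕ) (hℓ : ℓ = 1 + Nat.clog 2 n) (hk : k = (m + 2 * ℓ - 1) / (2 * ℓ))
    (b : ℕ → ℕ) (hb : ∀ i, b i = ∑ j ∈ Finset.range ℓ, 2 ^ j * W (i * ℓ + j)) :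
    (∀ i < 2 * k, b i < 2 ^ (2 * ℓ)) ∧
    ∑ i ∈ Finset.range m, 2 ^ i * W i =
      (∑ i ∈ Finset.range k, 2 ^ (2 * i * ℓ) * b (2 * i)) +
      (∑ i ∈ Finset.range k, 2 ^ ((2 * i + 1) * ℓ) * b (2 * i + 1)) := by
  have hn : n < 2 ^ ℓ := calc
    n ≤ 2 ^ Nat.clog 2 n := Nat.le_pow_clog one_lt_two n
    _ < 2 ^ ℓ := Nat.pow_lt_pow_right one_lt_two (by omega)
  have hW_lt : ∀ i, W i < 2 ^ ℓ := fun i =>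
    (lt_or_ge i m).elim (fun h => (hW i h).trans_lt hn) (fun h => hW0 i h ▸ Nat.two_pow_pos ℓ)
  refine ⟨fun i _ => hb i ▸ sum_range_two_pow_mul_lt_two_pow_two_mul fun j _ => hW_lt _, ?_⟩
  have hm : m ≤ 2 * k * ℓ := by
    rw [hk, mul_right_comm, ← Nat.ceilDiv_eq_add_pred_div]
    exact (ceilDiv_le_iff_le_mul (by omega)).1 le_rfl
  calc ∑ i ∈ range m, 2 ^ i * W i = ∑ i ∈ range (2 * k * ℓ), 2 ^ i * W i :=
        sum_subset (range_subset_range.2 hm) fun i _ hi => by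
          rw [hW0 i (by simpa using hi), mul_zero]
    _ = ∑ i ∈ range (2 * k), 2 ^ (i * ℓ) * b i := by
        simp only [sum_range_two_pow_mul_eq_sum_blocks, hb]
    _ = _ := sum_range_two_mul (fun i => 2 ^ (i * ℓ) * b i) k

theorem block_decomposition (W : ℕ → ℕ) (n m : ℕ) (hn : 1 ≤ n)
    (hW : ∀ i < m, W i ≤ n) (hW0 : ∀ i, m ≤ i → W i = 0)
    (ℓ k : ℕ) (hℓ : ℓ = 1 + Nat.clog 2 n) (hk : k = (m + 2 * ℓ - 1) / (2 * ℓ))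
    (b : ℕ → ℕ) (hb : ∀ i, b i = ∑ j ∈ Finset.range ℓ, 2 ^ j * W (i * ℓ + j)) :
    (∀ i < 2 * k, b i < 2 ^ (2 * ℓ)) ∧
    ∑ i ∈ Finset.range m, 2 ^ i * W i =
      (∑ i ∈ Finset.range k, 2 ^ (2 * i * ℓ) * b (2 * i)) +
      (∑ i ∈ Finset.range k, 2 ^ ((2 * i + 1) * ℓ) * b (2 * i + 1)) :=
  block_decomposition_general W n m hW hW0 ℓ k hℓ hk b hb
end
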